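/- Let k be a commutative ring, A an associative unital k-algebra, λ ∈ k, and let P be a Rota–Baxter operator of weight λ on A. Define P̄ : (ℕ → A) → (ℕ → A) by P̄(f)(0) = P(f(0)) and P̄(f)(n) = f(n−1) for n > 0. Then on ℕ → A equipped with the λ-Hurwitz product: (i) P̄ is a Rota–Baxter operator of weight λ; (ii) d ∘ P̄ = id, where d is the shift map d(f)(n) = f(n+1); (iii) evaluation at 0 intertwines P̄ and P, i.e., P̄(f)(0) = P(f(0)) for all f. -/

import Mathlib

/-!
The shift `d f = fun n => f (n + 1)` is a derivation of weight `λ` for the `λ`-Hurwitz product,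
`d (f * g) = d f * g + f * d g + λ • d f * d g`: writing the trinomial coefficient as a product of
two binomial ones, this is Pascal's rule applied once in each of the three indices `r, s, t`.
A sequence `u` equals `P̄ v` as soon as `d u = v` and `u 0 = P (v 0)`. Since `d ∘ P̄ = id`, the
derivation rule gives the first condition for the Rota–Baxter identity of `P̄`, and at index `0`
it is the Rota–Baxter identity of `P`.
-/

/-- The `lam`-Hurwitz product of sequences in a `k`-algebra `A`. -/
def hurwitz {k A : Type*} [CommRing k] [Ring A] [Algebra k A]
    (lam : k) (f g : ℕ → A) : ℕ → A := fun n =>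
  ∑ p ∈ Finset.HasAntidiagonal.antidiagonal n, ∑ q ∈ Finset.HasAntidiagonal.antidiagonal p.2,
    (Nat.factorial n / (Nat.factorial p.1 * Nat.factorial q.1 * Nat.factorial q.2)) •
      lam ^ q.2 • (f (p.1 + q.2) * g (q.1 + q.2))

/-- `P̄(f)(0) = P(f 0)` and `P̄(f)(n) = f(n-1)` for `n > 0`. -/
def pbar {A : Type*} (P : A → A) (f : ℕ → A) : ℕ → A := fun n =>
  match n with
  | 0 => P (f 0)
  | m + 1 => f m

open Finset
open scoped Nat

section BinomSum

variable {M : Type*} [AddCommMonoid M]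

def binomSum (n : ℕ) (G : ℕ → ℕ → M) : M :=
  ∑ ij ∈ antidiagonal n, n.choose ij.1 • G ij.1 ij.2

lemma binomSum_add (n : ℕ) (G H : ℕ → ℕ → M) :
    binomSum n (fun i j => G i j + H i j) = binomSum n G + binomSum n H := by
  simp only [binomSum, smul_add, sum_add_distrib]

lemma binomSum_smul {R : Type*} [Monoid R] [DistribMulAction R M] (c : R) (n : ℕ)
    (G : ℕ → ℕ → M) : binomSum n (fun i j => c • G i j) = c • binomSum n G := by
  simp only [binomSum, smul_sum, smul_comm c]

lemma binomSum_succ (n : ℕ) (G : ℕ → ℕ → M) :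
    binomSum (n + 1) G =
      binomSum n (fun i j => G (i + 1) j) + binomSum n (fun i j => G i (j + 1)) := by
  rw [binomSum, sum_antidiagonal_choose_succ_nsmul, add_comm]
  congr 1
  refine sum_congr rfl fun ij hij => ?_
  rw [Nat.choose_symm_of_eq_add (mem_antidiagonal.mp hij).symm]

end BinomSum

lemma factorial_div_factorial_mul_factorial_mul_factorial (r s t : ℕ) :
    (r + (s + t))! / (r ! * s ! * t !) = (r + (s + t)).choose r * (s + t).choose s := by
  refine Nat.div_eq_of_eq_mul_left (by positivity) ?_
  have hr := Nat.add_choose_mul_factorial_mul_factorial r (s + t)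
  have hs := Nat.add_choose_mul_factorial_mul_factorial s t
  rw [← Nat.choose_symm_add] at hr hs
  rw [← hr, ← hs]
  ring

section Hurwitz

variable {k A : Type*} [CommRing k] [Ring A] [Algebra k A] (lam : k) (f g : ℕ → A)

lemma hurwitz_eq_binomSum (n : ℕ) :
    hurwitz lam f g n =
      binomSum n fun r w => binomSum w fun s t => lam ^ t • (f (r + t) * g (s + t)) := by
  unfold hurwitz binomSum
  refine sum_congr rfl fun p hp => ?_
  rw [smul_sum]
  refine sum_congr rfl fun q hq => ?_
  obtain ⟨r, w⟩ := p
  obtain ⟨s, t⟩ := q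
  obtain rfl := mem_antidiagonal.mp hp
  obtain rfl := mem_antidiagonal.mp hq
  rw [factorial_div_factorial_mul_factorial_mul_factorial, mul_smul]

lemma hurwitz_zero : hurwitz lam f g 0 = f 0 * g 0 := by
  simp [hurwitz]

lemma hurwitz_succ (n : ℕ) :
    hurwitz lam f g (n + 1) =
      hurwitz lam (fun m => f (m + 1)) g n + hurwitz lam f (fun m => g (m + 1)) n +
        lam • hurwitz lam (fun m => f (m + 1)) (fun m => g (m + 1)) n := by
  simp only [hurwitz_eq_binomSum, binomSum_succ, binomSum_add, ← binomSum_smul, smul_smul,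
    pow_succ', ← Nat.add_assoc, Nat.add_right_comm _ 1]
  exact (add_assoc ..).symm

end Hurwitz

section Pbar

variable {A : Type*}

lemma pbar_zero (P : A → A) (f : ℕ → A) : pbar P f 0 = P (f 0) := rfl

lemma pbar_shift (P : A → A) (f : ℕ → A) : (fun n => pbar P f (n + 1)) = f := rfl

lemma eq_pbar_of_shift {P : A → A} {u v : ℕ → A} (h0 : u 0 = P (v 0))
    (hshift : (fun n => u (n + 1)) = v) : u = pbar P v := by
  funext n
  cases n with
  | zero => exact h0
  | succ n => exact congrFun hshift n

lemma pbar_add [Add A] {F : Type*} [FunLike F A A] [AddHomClass F A A] (P : F) (f g : ℕ → A) :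
    pbar P (f + g) = pbar P f + pbar P g :=
  (eq_pbar_of_shift (P := P) (u := pbar P f + pbar P g) (v := f + g)
    (map_add P (f 0) (g 0)).symm rfl).symm

lemma pbar_smul {k : Type*} [SMul k A] {F : Type*} [FunLike F A A] [MulActionHomClass F k A A]
    (P : F) (c : k) (f : ℕ → A) : pbar P (c • f) = c • pbar P f :=
  (eq_pbar_of_shift (P := P) (u := c • pbar P f) (v := c • f)
    (map_smul P c (f 0)).symm rfl).symm

end Pbar

/-- if `P` is a Rota–Baxter operator of weight `lam` on `A` then `P̄` is a
Rota–Baxter operator of weight `lam` on `ℕ → A` with the `lam`-Hurwitz product, the shift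
map is a left inverse of `P̄`, and evaluation at `0` intertwines `P̄` with `P`. -/
theorem pbar_rota_baxter_hurwitz
    {k A : Type*} [CommRing k] [Ring A] [Algebra k A] (lam : k)
    (P : A →ₗ[k] A)
    (hP : ∀ a b : A, P a * P b = P (P a * b + a * P b + lam • (a * b))) :
    (∀ f g : ℕ → A, pbar P (f + g) = pbar P f + pbar P g) ∧
    (∀ (c : k) (f : ℕ → A), pbar P (c • f) = c • pbar P f) ∧
    (∀ f g : ℕ → A,
      hurwitz lam (pbar P f) (pbar P g) =
        pbar P (hurwitz lam (pbar P f) g + hurwitz lam f (pbar P g) +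
          lam • hurwitz lam f g)) ∧
    (∀ f : ℕ → A, (fun n => pbar P f (n + 1)) = f) ∧
    (∀ f : ℕ → A, pbar P f 0 = P (f 0)) := by
  refine ⟨pbar_add P, pbar_smul P, fun f g => ?_, pbar_shift P, pbar_zero P⟩
  refine eq_pbar_of_shift ?_ ?_
  · simpa only [hurwitz_zero, pbar_zero, Pi.add_apply, Pi.smul_apply, map_add] using hP (f 0) (g 0)
  · funext n
    rw [hurwitz_succ, add_comm (hurwitz lam _ (pbar P g) n)]
    rfl
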